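/- arXiv:2111.01771 — 7 statements merged into one kernel-verified Lean document; each statement's English description precedes it below -/
import Mathlib

section
/- Let A be an m×(m+1) matrix with entries in an arbitrary field. For any column indices 1 ≤ i < j < k ≤ m+1 and any row index 1 ≤ α ≤ m, the identity det A^{î} · det A^{ĵ k̂}_{α̂} + det A^{k̂} · det A^{î ĵ}_{α̂} = det A^{ĵ} · det A^{î k̂}_{α̂} holds. -/
/-- The entry of a matrix at the 1-based position `(a, b)`; equals `0` out of range. -/
def ent {F : Type*} [Zero F] {r c : ℕ} (A : Matrix (Fin r) (Fin c) F) (a b : ℕ) : F :=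
  if h : a - 1 < r ∧ b - 1 < c then A ⟨a - 1, h.1⟩ ⟨b - 1, h.2⟩ else 0

/-- The determinant of the `p × p` submatrix of `A` whose rows are the (1-based) rows
`row 0, row 1, …, row (p-1)` of `A` and whose columns are `col 0, …, col (p-1)`. -/
noncomputable def subdet {F : Type*} [Field F] {r c : ℕ} (A : Matrix (Fin r) (Fin c) F)
    (p : ℕ) (row col : ℕ → ℕ) : F :=
  (Matrix.of fun a b : Fin p => ent A (row a.val) (col b.val)).det

/-- The increasing enumeration (0-based argument, 1-based values) of `{1, …} \ {i}`. -/
def del1 (i : ℕ) : ℕ → ℕ := fun t => if t + 1 < i then t + 1 else t + 2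

/-- The increasing enumeration (0-based argument, 1-based values) of `{1, …} \ {i, j}`
for `i < j`. -/
def del2 (i j : ℕ) : ℕ → ℕ :=
  fun t => if t + 1 < i then t + 1 else if t + 2 < j then t + 2 else t + 3

/-!
Write `D c` for the maximal minor of `A` without column `c`, `A'` for `A` without row `α`, and
`a'_c` for column `c` of `A'`. Expanding a determinant with a repeated row along that row shows
that `((-1)^c D c)_c` is orthogonal to every row of `A`. Let `T` be the set of columns other than
`i, j, k` and `z c := det [a'_c | A'_T]`. Expanding along the first column writes `z` as a linear
combination of rows of `A'`, so `∑ c, (-1)^c D c z c = 0`. Now `z c = 0` for `c ∈ T` (repeated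
column), while for `c ∈ {i, j, k}` moving column `c` to its sorted place turns `z c` into the
minor of `A'` without the other two columns, up to a sign. The three surviving terms are the
identity.
-/

open Matrix

section Laplace

variable {R : Type*} [CommRing R]

theorem sum_neg_one_pow_mul_det_submatrix_succAbove_eq_zero {n : ℕ}
    (B : Matrix (Fin n) (Fin (n + 1)) R) (β : Fin n) :
    ∑ c : Fin (n + 1), (-1) ^ (c : ℕ) * B β c * (B.submatrix id c.succAbove).det = 0 := by
  have h := det_zero_of_row_eq (M := B.submatrix (Fin.cons β id : Fin (n + 1) → Fin n) id)
    (Fin.succ_ne_zero β).symm (by ext; simp)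
  rw [det_succ_row_zero] at h
  simpa using h

theorem sum_neg_one_pow_mul_det_mul_det_submatrix_cons_eq_zero {n s : ℕ}
    (A : Matrix (Fin n) (Fin (n + 1)) R) (e : Fin (s + 1) → Fin n) (t : Fin s → Fin (n + 1)) :
    ∑ c : Fin (n + 1), (-1) ^ (c : ℕ) * (A.submatrix id c.succAbove).det *
      (A.submatrix e (Fin.cons c t : Fin (s + 1) → Fin (n + 1))).det = 0 := by
  simp_rw [det_succ_column_zero, Finset.mul_sum]
  rw [Finset.sum_comm]
  refine Finset.sum_eq_zero fun β _ => ?_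
  calc _ = (-1) ^ (β : ℕ) * (A.submatrix (e ∘ β.succAbove) t).det *
        ∑ c : Fin (n + 1), (-1) ^ (c : ℕ) * A (e β) c * (A.submatrix id c.succAbove).det := by
        rw [Finset.mul_sum]
        refine Finset.sum_congr rfl fun c _ => ?_
        rw [show (A.submatrix e (Fin.cons c t)).submatrix β.succAbove Fin.succ
          = A.submatrix (e ∘ β.succAbove) t from rfl]
        simp only [submatrix_apply, Fin.cons_zero]
        ring
    _ = 0 := by rw [sum_neg_one_pow_mul_det_submatrix_succAbove_eq_zero, mul_zero]

theorem det_mul_det_submatrix_cons_three_term {n s : ℕ} (A : Matrix (Fin n) (Fin (n + 1)) R)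
    (e : Fin (s + 1) → Fin n) (t : Fin s → Fin (n + 1)) {i j k : Fin (n + 1)}
    (hij : i ≠ j) (hik : i ≠ k) (hjk : j ≠ k)
    (ht : ∀ c, c ≠ i → c ≠ j → c ≠ k → c ∈ Set.range t) :
    (-1) ^ (i : ℕ) * (A.submatrix id i.succAbove).det *
        (A.submatrix e (Fin.cons i t : Fin (s + 1) → Fin (n + 1))).det
      + (-1) ^ (j : ℕ) * (A.submatrix id j.succAbove).det *
        (A.submatrix e (Fin.cons j t : Fin (s + 1) → Fin (n + 1))).det
      + (-1) ^ (k : ℕ) * (A.submatrix id k.succAbove).det *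
        (A.submatrix e (Fin.cons k t : Fin (s + 1) → Fin (n + 1))).det = 0 := by
  rw [← sum_neg_one_pow_mul_det_mul_det_submatrix_cons_eq_zero A e t,
    ← Finset.sum_subset (Finset.subset_univ {i, j, k}), Finset.sum_insert (by simp [hij, hik]),
    Finset.sum_pair hjk, add_assoc]
  intro c _ hc
  simp only [Finset.mem_insert, Finset.mem_singleton, not_or] at hc
  obtain ⟨γ, rfl⟩ := ht c hc.1 hc.2.1 hc.2.2
  rw [det_zero_of_column_eq (Fin.succ_ne_zero γ).symm (fun _ => by simp), mul_zero]

end Laplace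

theorem Fin.val_succAbove {n : ℕ} (p : Fin (n + 1)) (i : Fin n) :
    (p.succAbove i : ℕ) = if (i : ℕ) < p then (i : ℕ) else (i : ℕ) + 1 := by
  by_cases h : (i : ℕ) < p
  · rw [if_pos h, Fin.succAbove_of_castSucc_lt p i (by rwa [Fin.lt_def, Fin.val_castSucc])]
    rfl
  · rw [if_neg h, Fin.succAbove_of_le_castSucc p i (by rw [Fin.le_def, Fin.val_castSucc]; omega)]
    rfl

theorem del1_succ_eq_succAbove {n : ℕ} (c : Fin (n + 1)) (b : Fin n) :
    del1 (c + 1) b = c.succAbove b + 1 := by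
  rw [Fin.val_succAbove]
  unfold del1
  split_ifs <;> omega

section Subdet

variable {F : Type*} [Field F] {r c p : ℕ}

theorem subdet_eq_det_submatrix (A : Matrix (Fin r) (Fin c) F) {row col : ℕ → ℕ}
    (e : Fin p → Fin r) (f : Fin p → Fin c) (he : ∀ a : Fin p, row a = e a + 1)
    (hf : ∀ b : Fin p, col b = f b + 1) :
    subdet A p row col = (A.submatrix e f).det := by
  unfold subdet
  congr 1
  ext a b
  simp [ent, he, hf]

theorem subdet_del1_succ_eq_det_submatrix (A : Matrix (Fin r) (Fin (p + 1)) F) {row : ℕ → ℕ}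
    (e : Fin p → Fin r) (he : ∀ a : Fin p, row a = e a + 1) (d : Fin (p + 1)) :
    subdet A p row (del1 (d + 1)) = (A.submatrix e d.succAbove).det :=
  subdet_eq_det_submatrix A e _ he (del1_succ_eq_succAbove d)

theorem subdet_eq_neg_one_pow_mul_det_submatrix_cons (A : Matrix (Fin r) (Fin c) F)
    {row col : ℕ → ℕ} (e : Fin (p + 1) → Fin r) (he : ∀ a : Fin (p + 1), row a = e a + 1)
    (x : Fin c) (t : Fin p → Fin c) (q : Fin (p + 1)) (hq : col q = x + 1)
    (ht : ∀ b : Fin p, col (q.succAbove b) = t b + 1) :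
    subdet A (p + 1) row col
      = (-1) ^ (q : ℕ) * (A.submatrix e (Fin.cons x t : Fin (p + 1) → Fin c)).det := by
  have hf : ∀ b : Fin (p + 1),
      col b = (Fin.cons x t : Fin (p + 1) → Fin c) (Fin.cycleRange q b) + 1 := by
    intro b
    refine Fin.succAboveCases q ?_ (fun b => ?_) b
    · simpa [Fin.cycleRange_self] using hq
    · simpa [Fin.cycleRange_succAbove] using ht b
  rw [subdet_eq_det_submatrix A e _ he hf]
  exact (det_permute' (Fin.cycleRange q) (A.submatrix e (Fin.cons x t))).trans
    (by rw [Fin.sign_cycleRange]; push_cast; rfl)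

end Subdet

/-- The columns other than the 1-based columns `i < j < k`, in increasing order, as 0-based
indices. -/
def compl3 (r i j k : ℕ) : Fin r → Fin (r + 3) := fun b =>
  ⟨if b + 1 < i then b else if b + 2 < j then b + 1 else if b + 3 < k then b + 2 else b + 3,
    by split_ifs <;> omega⟩

theorem mem_range_compl3 {r i j k : ℕ} {i0 j0 k0 c : Fin (r + 3)} (hi : (i0 : ℕ) + 1 = i)
    (hj : (j0 : ℕ) + 1 = j) (hk : (k0 : ℕ) + 1 = k) (hij : i < j) (hjk : j < k)
    (hci : c ≠ i0) (hcj : c ≠ j0) (hck : c ≠ k0) :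
    c ∈ Set.range (compl3 r i j k) := by
  rw [ne_eq, Fin.ext_iff] at hci hcj hck
  refine ⟨⟨if c + 1 < i then c else if c + 1 < j then c - 1 else if c + 1 < k then c - 2
    else c - 3, by split_ifs <;> omega⟩, Fin.ext ?_⟩
  simp only [compl3]
  split_ifs <;> omega

/-- Desnanot–Jacobi identity for an `m × (m+1)` matrix: for column indices
`1 ≤ i < j < k ≤ m+1` and a row index `1 ≤ α ≤ m`,
`det A^{î} det A^{ĵk̂}_{α̂} + det A^{k̂} det A^{îĵ}_{α̂} = det A^{ĵ} det A^{îk̂}_{α̂}`. -/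
theorem statement0 {F : Type*} [Field F] {m : ℕ} (A : Matrix (Fin m) (Fin (m + 1)) F)
    (i j k α : ℕ) (hi : 1 ≤ i) (hij : i < j) (hjk : j < k) (hk : k ≤ m + 1)
    (hα1 : 1 ≤ α) (hα2 : α ≤ m) :
    subdet A m (fun t => t + 1) (del1 i) * subdet A (m - 1) (del1 α) (del2 j k)
      + subdet A m (fun t => t + 1) (del1 k) * subdet A (m - 1) (del1 α) (del2 i j)
    = subdet A m (fun t => t + 1) (del1 j) * subdet A (m - 1) (del1 α) (del2 i k) := by
  obtain ⟨r, rfl⟩ : ∃ r, m = r + 2 := ⟨m - 2, by omega⟩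
  obtain ⟨i0, rfl⟩ : ∃ i0 : Fin (r + 3), i = i0 + 1 := ⟨⟨i - 1, by omega⟩, by simp; omega⟩
  obtain ⟨j0, rfl⟩ : ∃ j0 : Fin (r + 3), j = j0 + 1 := ⟨⟨j - 1, by omega⟩, by simp; omega⟩
  obtain ⟨k0, rfl⟩ : ∃ k0 : Fin (r + 3), k = k0 + 1 := ⟨⟨k - 1, by omega⟩, by simp; omega⟩
  obtain ⟨α0, rfl⟩ : ∃ α0 : Fin (r + 2), α = α0 + 1 := ⟨⟨α - 1, by omega⟩, by simp; omega⟩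
  obtain ⟨j1, hj1⟩ : ∃ j1, (j0 : ℕ) = j1 + 1 := ⟨j0 - 1, by omega⟩
  obtain ⟨k2, hk2⟩ : ∃ k2, (k0 : ℕ) = k2 + 2 := ⟨k0 - 2, by omega⟩
  set t := compl3 r (i0 + 1) (j0 + 1) (k0 + 1)
  have key := det_mul_det_submatrix_cons_three_term A α0.succAbove t
    (Fin.ne_of_lt (by omega)) (Fin.ne_of_lt (by omega)) (Fin.ne_of_lt (by omega))
    (fun _ => mem_range_compl3 rfl rfl rfl hij hjk)
  rw [hj1, pow_succ, mul_neg_one, hk2, pow_add, neg_one_sq, mul_one] at key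
  have hrow := del1_succ_eq_succAbove α0
  rw [show r + 2 - 1 = r + 1 from rfl, subdet_del1_succ_eq_det_submatrix A id (fun _ => rfl) i0,
    subdet_del1_succ_eq_det_submatrix A id (fun _ => rfl) j0,
    subdet_del1_succ_eq_det_submatrix A id (fun _ => rfl) k0]
  -- In the minor without columns `j, k` column `i` sits at position `i0`; in the one without
  -- `i, k` column `j` sits at `j0 - 1`; in the one without `i, j` column `k` sits at `k0 - 2`.
  rw [subdet_eq_neg_one_pow_mul_det_submatrix_cons A (col := del2 (j0 + 1) (k0 + 1))
      α0.succAbove hrow i0 t ⟨i0, by omega⟩ (if_pos hij)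
      (fun b => by simp only [Fin.val_succAbove, del2, t, compl3]; split_ifs <;> omega),
    subdet_eq_neg_one_pow_mul_det_submatrix_cons A (col := del2 (i0 + 1) (k0 + 1))
      α0.succAbove hrow j0 t ⟨j1, by omega⟩ (by simp only [del2]; split_ifs <;> omega)
      (fun b => by simp only [Fin.val_succAbove, del2, t, compl3]; split_ifs <;> omega),
    subdet_eq_neg_one_pow_mul_det_submatrix_cons A (col := del2 (i0 + 1) (j0 + 1))
      α0.succAbove hrow k0 t ⟨k2, by omega⟩ (by simp only [del2]; split_ifs <;> omega)
      (fun b => by simp only [Fin.val_succAbove, del2, t, compl3]; split_ifs <;> omega)]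
  linear_combination key
end

section
/- Let Y be an n×n matrix over a field and let s, k, i be integers with 2 ≤ s ≤ n−1, 0 ≤ k ≤ s−2 and 0 ≤ i ≤ n−s−1. Then det Y^{[n−i,n]}_{[s,s+i]} · det Y^{[n−i−1,n]}_{{s−k−1}∪[s+1,s+i+1]} = det Y^{[n−i−1,n]}_{[s,s+i+1]} · det Y^{[n−i,n]}_{{s−k−1}∪[s+1,s+i]} + det Y^{[n−i−1,n]}_{{s−k−1}∪[s,s+i]} · det Y^{[n−i,n]}_{[s+1,s+i+1]}. (For i = 0 the interval [s+1,s+i] is empty, so the minor det Y^{[n−i,n]}_{{s−k−1}∪[s+1,s+i]} is the single entry Y_{s−k−1,n}.) -/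
namespace Matrix

section DesnanotJacobi

variable {R : Type*} [CommRing R] {p : ℕ}

def finInteriorSumEnds (p : ℕ) : Fin p ⊕ Fin 2 ≃ Fin (p + 2) :=
  finSumFinEquiv.trans (finRotate (p + 2))

@[simp] lemma finInteriorSumEnds_inl (j : Fin p) :
    finInteriorSumEnds p (.inl j) = j.castSucc.succ := by
  ext
  simp only [finInteriorSumEnds, Equiv.trans_apply, finSumFinEquiv_apply_left, coe_finRotate]
  simp [Fin.ext_iff]; omega

@[simp] lemma finInteriorSumEnds_inr_zero :
    finInteriorSumEnds p (.inr 0) = Fin.last (p + 1) := by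
  ext
  simp only [finInteriorSumEnds, Equiv.trans_apply, finSumFinEquiv_apply_right, coe_finRotate]
  simp [Fin.ext_iff]

@[simp] lemma finInteriorSumEnds_inr_one : finInteriorSumEnds p (.inr 1) = 0 := by
  ext
  simp only [finInteriorSumEnds, Equiv.trans_apply, finSumFinEquiv_apply_right, coe_finRotate]
  simp [Fin.ext_iff]

lemma det_eq_det_interior_mul_det_ends (N : Matrix (Fin (p + 2)) (Fin (p + 2)) R)
    (h0 : ∀ j : Fin p, N 0 j.castSucc.succ = 0)
    (hl : ∀ j : Fin p, N (Fin.last _) j.castSucc.succ = 0) :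
    N.det = (N.submatrix (Fin.succ ∘ Fin.castSucc) (Fin.succ ∘ Fin.castSucc)).det *
      (N 0 0 * N (Fin.last _) (Fin.last _) - N 0 (Fin.last _) * N (Fin.last _) 0) := by
  set e := finInteriorSumEnds p
  have hblock : (N.submatrix e e).toBlocks₂₁ = 0 := by
    ext c j
    fin_cases c <;> simp [toBlocks₂₁, e, h0, hl]
  rw [← det_submatrix_equiv_self e N, ← fromBlocks_toBlocks (N.submatrix e e), hblock,
    det_fromBlocks_zero₂₁, det_fin_two]
  simp [toBlocks₁₁, toBlocks₂₂, e, submatrix]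
  ring

lemma det_mul_adjugate_ends_minor_eq (M : Matrix (Fin (p + 2)) (Fin (p + 2)) R) :
    M.det * (M.adjugate 0 0 * M.adjugate (Fin.last _) (Fin.last _) -
      M.adjugate 0 (Fin.last _) * M.adjugate (Fin.last _) 0) =
    M.det *
      (M.det * (M.submatrix (Fin.succ ∘ Fin.castSucc) (Fin.succ ∘ Fin.castSucc)).det) := by
  have hint0 (j : Fin p) : j.castSucc.succ ≠ 0 := Fin.succ_ne_zero _
  have hintl (j : Fin p) : j.castSucc.succ ≠ Fin.last _ := by
    simp [Fin.ext_iff]; omega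
  -- `M * C` is `M` with its columns `0` and `last` replaced by `det M` times unit columns.
  let C : Matrix (Fin (p + 2)) (Fin (p + 2)) R :=
    of fun b c => if c = 0 ∨ c = Fin.last _ then M.adjugate b c else (1 : Matrix _ _ R) b c
  have hMC : M * C =
      of fun b c => if c = 0 ∨ c = Fin.last _ then M.det * (1 : Matrix _ _ R) b c else M b c := by
    ext b c
    have : (M * C) b c = if c = 0 ∨ c = Fin.last _ then (M * M.adjugate) b c
        else (M * 1 : Matrix (Fin (p + 2)) (Fin (p + 2)) R) b c := by
      simp only [mul_apply, C, of_apply]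
      split_ifs <;> rfl
    rw [this, mul_adjugate, mul_one, Matrix.smul_apply, smul_eq_mul, of_apply]
  have hC : C.det = M.adjugate 0 0 * M.adjugate (Fin.last _) (Fin.last _) -
      M.adjugate 0 (Fin.last _) * M.adjugate (Fin.last _) 0 := by
    rw [det_eq_det_interior_mul_det_ends C (fun j => ?_) (fun j => ?_)]
    · have : C.submatrix (Fin.succ ∘ Fin.castSucc) (Fin.succ ∘ Fin.castSucc) = 1 := by
        ext a b
        simp [C, hint0, hintl, one_apply]
      simp [this, C]
    · simp [C, one_apply, (hint0 j).symm]
    · simp [C, one_apply, (hintl j).symm]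
  have hMC_interior : (M * C).submatrix (Fin.succ ∘ Fin.castSucc) (Fin.succ ∘ Fin.castSucc) =
      M.submatrix (Fin.succ ∘ Fin.castSucc) (Fin.succ ∘ Fin.castSucc) := by
    ext a b
    simp [hMC, hint0, hintl]
  have hMC_det : (M * C).det = M.det *
      (M.det * (M.submatrix (Fin.succ ∘ Fin.castSucc) (Fin.succ ∘ Fin.castSucc)).det) := by
    rw [← det_transpose, det_eq_det_interior_mul_det_ends _ (fun j => ?_) (fun j => ?_),
      ← transpose_submatrix, det_transpose, hMC_interior]
    · simp only [transpose_apply, hMC, of_apply]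
      simp
      ring
    · simp [hMC, hint0]
    · simp [hMC, hintl]
  rw [← hC, ← hMC_det, det_mul]

theorem adjugate_ends_minor_eq_det_mul_det_interior (M : Matrix (Fin (p + 2)) (Fin (p + 2)) R) :
    M.adjugate 0 0 * M.adjugate (Fin.last _) (Fin.last _) -
      M.adjugate 0 (Fin.last _) * M.adjugate (Fin.last _) 0 =
    M.det * (M.submatrix (Fin.succ ∘ Fin.castSucc) (Fin.succ ∘ Fin.castSucc)).det := by
  let X := mvPolynomialX (Fin (p + 2)) (Fin (p + 2)) ℤ
  have hX := mul_left_cancel₀ (det_mvPolynomialX_ne_zero _ ℤ) (det_mul_adjugate_ends_minor_eq X)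
  rw [← mvPolynomialX_mapMatrix_aeval ℤ M, ← AlgHom.map_adjugate, ← AlgHom.map_det]
  have := congrArg (MvPolynomial.aeval fun q : Fin (p + 2) × Fin (p + 2) => M q.1 q.2) hX
  simpa [AlgHom.map_det, X, submatrix_map] using this

theorem desnanot_jacobi (M : Matrix (Fin (p + 2)) (Fin (p + 2)) R) :
    M.det * (M.submatrix (Fin.succ ∘ Fin.castSucc) (Fin.succ ∘ Fin.castSucc)).det =
      (M.submatrix Fin.succ Fin.succ).det * (M.submatrix Fin.castSucc Fin.castSucc).det -
        (M.submatrix Fin.succ Fin.castSucc).det * (M.submatrix Fin.castSucc Fin.succ).det := by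
  rw [← adjugate_ends_minor_eq_det_mul_det_interior]
  have hsign : (-1 : R) ^ (p + 1 + (p + 1)) = 1 := Even.neg_one_pow ⟨p + 1, rfl⟩
  simp only [adjugate_fin_succ_eq_det_submatrix, Fin.succAbove_zero, Fin.succAbove_last,
    Fin.val_zero, Fin.val_last, add_zero, zero_add, pow_zero, one_mul, hsign]
  linear_combination
    -(M.submatrix Fin.castSucc Fin.succ).det * (M.submatrix Fin.succ Fin.castSucc).det * hsign

end DesnanotJacobi

section ThreeTerm

variable {R : Type*} [CommRing R]

lemma det_succ_column_of_ne_eq_zero {m : ℕ} (N : Matrix (Fin (m + 1)) (Fin (m + 1)) R)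
    {r j : Fin (m + 1)} (h : ∀ a ≠ r, N a j = 0) :
    N.det = (-1) ^ (r.val + j.val) * N r j * (N.submatrix r.succAbove j.succAbove).det := by
  rw [det_succ_column N j, Fintype.sum_eq_single r fun a ha => by rw [h a ha, mul_zero, zero_mul]]

variable {p : ℕ}

theorem det_submatrix_three_term_identity (A : Matrix (Fin (p + 3)) (Fin (p + 2)) R) :
    (A.submatrix (Fin.succ ∘ Fin.castSucc) Fin.succ).det *
        (A.submatrix (Fin.succAbove 1) id).det =
      (A.submatrix Fin.succ id).det *
          (A.submatrix (Fin.castSucc ∘ Fin.succAbove 1) Fin.succ).det +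
      (A.submatrix Fin.castSucc id).det * (A.submatrix (Fin.succ ∘ Fin.succ) Fin.succ).det := by
  let Q : Matrix (Fin (p + 3)) (Fin (p + 3)) R :=
    of fun a => Fin.lastCases (if a = 1 then 1 else 0) (A a)
  have hQ_castSucc (f : Fin (p + 2) → Fin (p + 3)) :
      Q.submatrix f Fin.castSucc = A.submatrix f id := by
    ext; simp [Q]
  have hQ_interior {m : ℕ} (f : Fin m → Fin (p + 3)) :
      Q.submatrix f (Fin.succ ∘ Fin.castSucc) = A.submatrix f Fin.succ := by
    ext; simp only [Q, submatrix_apply, Function.comp_apply, of_apply, Fin.succ_castSucc,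
      Fin.lastCases_castSucc]
  have hQ_det : Q.det = (-1) ^ (p + 1) * (A.submatrix (Fin.succAbove 1) id).det := by
    rw [det_succ_column_of_ne_eq_zero Q (r := 1) (j := Fin.last _) fun a ha => by simp [Q, ha]]
    simp [Q, hQ_castSucc]
    ring
  have hQ_succ_succ : (Q.submatrix Fin.succ Fin.succ).det =
      (-1) ^ (p + 1) * (A.submatrix (Fin.succ ∘ Fin.succ) Fin.succ).det := by
    rw [det_succ_column_of_ne_eq_zero _ (r := 0) (j := Fin.last _) fun a ha => by
      simp only [Q, submatrix_apply, of_apply, Fin.succ_last, Fin.lastCases_last]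
      rw [if_neg (by rwa [← Fin.succ_zero_eq_one, Fin.succ_inj])]]
    rw [submatrix_submatrix, Fin.succAbove_last, hQ_interior]
    simp [Q]
  have hQ_castSucc_succ : (Q.submatrix Fin.castSucc Fin.succ).det =
      -((-1) ^ (p + 1) * (A.submatrix (Fin.castSucc ∘ Fin.succAbove 1) Fin.succ).det) := by
    rw [det_succ_column_of_ne_eq_zero _ (r := 1) (j := Fin.last _) fun a ha => by
      simp [Q, Fin.ext_iff] at ha ⊢; omega]
    rw [submatrix_submatrix, Fin.succAbove_last, hQ_interior]
    simp [Q]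
    ring
  have hDJ := desnanot_jacobi Q
  rw [hQ_det, hQ_interior, hQ_succ_succ, hQ_castSucc_succ, hQ_castSucc, hQ_castSucc] at hDJ
  refine (isUnit_neg_one.pow (p + 1)).mul_left_cancel ?_
  linear_combination hDJ

end ThreeTerm

end Matrix

open Matrix

section Subdet

variable {F : Type*} [Field F] {r c : ℕ} (Y : Matrix (Fin r) (Fin c) F)

lemma subdet_eq_det_submatrix_s3 {m p q : ℕ} (ρ κ : ℕ → ℕ) {row col : ℕ → ℕ}
    (f : Fin m → Fin p) (g : Fin m → Fin q)
    (hrow : ∀ a : Fin m, row a = ρ (f a)) (hcol : ∀ b : Fin m, col b = κ (g b)) :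
    subdet Y m row col =
      ((of fun (a : Fin p) (b : Fin q) => ent Y (ρ a) (κ b)).submatrix f g).det := by
  unfold subdet
  congr
  ext a b
  simp [hrow, hcol]

theorem subdet_three_term_identity (p : ℕ) (ρ κ : ℕ → ℕ) :
    subdet Y (p + 1) (fun t => ρ (t + 1)) (fun t => κ (t + 1)) *
      subdet Y (p + 2) (fun t => if t = 0 then ρ 0 else ρ (t + 1)) κ =
    subdet Y (p + 2) (fun t => ρ (t + 1)) κ *
        subdet Y (p + 1) (fun t => if t = 0 then ρ 0 else ρ (t + 1)) (fun t => κ (t + 1)) +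
      subdet Y (p + 2) ρ κ * subdet Y (p + 1) (fun t => ρ (t + 2)) (fun t => κ (t + 1)) := by
  have hskip {m : ℕ} (a : Fin (m + 1)) :
      (if a.val = 0 then ρ 0 else ρ (a.val + 1)) = ρ (Fin.succAbove (1 : Fin (m + 2)) a) := by
    cases a using Fin.cases <;> simp
  rw [subdet_eq_det_submatrix_s3 Y ρ κ (Fin.succ ∘ Fin.castSucc) Fin.succ (fun _ ↦ rfl) fun _ ↦ rfl,
    subdet_eq_det_submatrix_s3 Y ρ κ (Fin.succAbove 1) id hskip fun _ ↦ rfl,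
    subdet_eq_det_submatrix_s3 Y ρ κ Fin.succ id (fun _ ↦ rfl) fun _ ↦ rfl,
    subdet_eq_det_submatrix_s3 Y ρ κ (Fin.castSucc ∘ Fin.succAbove 1) Fin.succ hskip fun _ ↦ rfl,
    subdet_eq_det_submatrix_s3 Y ρ κ Fin.castSucc id (fun _ ↦ rfl) fun _ ↦ rfl,
    subdet_eq_det_submatrix_s3 Y ρ κ (Fin.succ ∘ Fin.succ) Fin.succ (fun _ ↦ rfl) fun _ ↦ rfl]
  exact det_submatrix_three_term_identity _

end Subdet

theorem statement3_general {F : Type*} [Field F] {n : ℕ} (Y : Matrix (Fin n) (Fin n) F)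
    (s k i : ℕ) (hs1 : 2 ≤ s) (hs2 : s ≤ n - 1) (hi : i ≤ n - s - 1) :
    subdet Y (i + 1) (fun t => s + t) (fun t => n - i + t) *
      subdet Y (i + 2) (fun t => if t = 0 then s - k - 1 else s + t) (fun t => n - i - 1 + t)
    = subdet Y (i + 2) (fun t => s + t) (fun t => n - i - 1 + t) *
        subdet Y (i + 1) (fun t => if t = 0 then s - k - 1 else s + t) (fun t => n - i + t)
      + subdet Y (i + 2) (fun t => if t = 0 then s - k - 1 else s + t - 1)
          (fun t => n - i - 1 + t) *
        subdet Y (i + 1) (fun t => s + 1 + t) (fun t => n - i + t) := by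
  have hn : i + 1 ≤ n := by omega
  convert subdet_three_term_identity Y i (fun t => if t = 0 then s - k - 1 else s + t - 1)
    (fun t => n - i - 1 + t) using 4 <;>
    (try funext) <;> grind

/-- The identity behind the mutation at `h_{s,n-i}` after the sequence
`B_{s-k} → ⋯ → B_{s-1}`:
`det Y^{[n−i,n]}_{[s,s+i]} · det Y^{[n−i−1,n]}_{{s−k−1}∪[s+1,s+i+1]}
 = det Y^{[n−i−1,n]}_{[s,s+i+1]} · det Y^{[n−i,n]}_{{s−k−1}∪[s+1,s+i]}
 + det Y^{[n−i−1,n]}_{{s−k−1}∪[s,s+i]} · det Y^{[n−i,n]}_{[s+1,s+i+1]}`. -/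
theorem statement3 {F : Type*} [Field F] {n : ℕ} (Y : Matrix (Fin n) (Fin n) F)
    (s k i : ℕ) (hs1 : 2 ≤ s) (hs2 : s ≤ n - 1) (hk : k ≤ s - 2) (hi : i ≤ n - s - 1) :
    subdet Y (i + 1) (fun t => s + t) (fun t => n - i + t) *
      subdet Y (i + 2) (fun t => if t = 0 then s - k - 1 else s + t) (fun t => n - i - 1 + t)
    = subdet Y (i + 2) (fun t => s + t) (fun t => n - i - 1 + t) *
        subdet Y (i + 1) (fun t => if t = 0 then s - k - 1 else s + t) (fun t => n - i + t)
      + subdet Y (i + 2) (fun t => if t = 0 then s - k - 1 else s + t - 1)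
          (fun t => n - i - 1 + t) *
        subdet Y (i + 1) (fun t => s + 1 + t) (fun t => n - i + t) :=
  statement3_general Y s k i hs1 hs2 hi
end

section
/- Let X and Y be n×n matrices over a field and let s, k, i be integers with 2 ≤ s ≤ n−1, 0 ≤ k ≤ s−2 and 1 ≤ i ≤ n−s. Then det [X^{[n−i+1,n]} | Y^{[s+i,n]}]_{[s,n]} · det [X^{[n−i,n]} | Y^{[s+i+1,n]}]_{{s−k−1}∪[s+1,n]} = det [X^{[n−i,n]} | Y^{[s+i,n]}]_{{s−k−1}∪[s,n]} · det [X^{[n−i+1,n]} | Y^{[s+i+1,n]}]_{[s+1,n]} + det [X^{[n−i,n]} | Y^{[s+i+1,n]}]_{[s,n]} · det [X^{[n−i+1,n]} | Y^{[s+i,n]}]_{{s−k−1}∪[s+1,n]}. (For i = n−s the interval [s+i+1,n] is empty, and the corresponding juxtapositions consist of the X-columns only.) -/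
/-- The determinant of the `p × p` matrix whose rows are the (1-based) indices
`row 0, …, row (p-1)` and whose columns are: the columns `colX 0, …, colX (px-1)` of `X`
followed by the columns `colY 0, …, colY (p-px-1)` of `Y`. -/
noncomputable def detXY {F : Type*} [Field F] {n : ℕ} (X Y : Matrix (Fin n) (Fin n) F)
    (p px : ℕ) (row colX colY : ℕ → ℕ) : F :=
  (Matrix.of fun a b : Fin p =>
    if b.val < px then ent X (row a.val) (colX b.val)
    else ent Y (row a.val) (colY (b.val - px))).det

open Matrix

theorem Fin.val_succAbove_eq_ite {m : ℕ} (p : Fin (m + 1)) (a : Fin m) :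
    (p.succAbove a : ℕ) = if (a : ℕ) < p then (a : ℕ) else (a : ℕ) + 1 := by
  unfold Fin.succAbove
  split_ifs <;> simp_all [Fin.lt_def]

namespace Matrix

variable {R : Type*} [CommRing R]

theorem det_updateCol_single {m : ℕ} (A : Matrix (Fin (m + 1)) (Fin (m + 1)) R)
    (i j : Fin (m + 1)) (c : R) :
    (A.updateCol j (Pi.single i c)).det =
      (-1) ^ (i + j : ℕ) * c * (A.submatrix i.succAbove j.succAbove).det := by
  rw [det_succ_column _ j, Finset.sum_eq_single i]
  · simp [submatrix_updateCol_succAbove]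
  · intro b _ hb
    simp [hb]
  · simp

theorem det_one_updateCol_updateCol {ι : Type*} [Fintype ι] [DecidableEq ι] {j j' : ι}
    (h : j ≠ j') (u v : ι → R) :
    (((1 : Matrix ι ι R).updateCol j' v).updateCol j u).det = u j * v j' - v j * u j' := by
  let U : Matrix ι (Fin 2) R :=
    of fun x => ![u x - (1 : Matrix ι ι R) x j, v x - (1 : Matrix ι ι R) x j']
  let W : Matrix (Fin 2) ι R := of ![Pi.single j 1, Pi.single j' 1]
  -- Sylvester's identity `det (1 + U * W) = det (1 + W * U)` reduces this to a `2 × 2` determinant.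
  have hUW : ((1 : Matrix ι ι R).updateCol j' v).updateCol j u = 1 + U * W := by
    ext x y
    by_cases hy : y = j
    · subst hy; simp [U, W, mul_apply, Fin.sum_univ_two, h.symm]
    by_cases hy' : y = j'
    · subst hy'; simp [U, W, mul_apply, Fin.sum_univ_two, hy]
    · simp [U, W, mul_apply, Fin.sum_univ_two, hy, hy']
  rw [hUW, det_one_add_mul_comm, det_fin_two]
  simp [U, W, h, h.symm]

theorem mulVec_adjugate_col {ι : Type*} [Fintype ι] [DecidableEq ι] (A : Matrix ι ι R) (j : ι) :
    A *ᵥ (fun x => A.adjugate x j) = Pi.single j A.det := by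
  ext y
  simpa [mulVec, dotProduct, mul_apply, one_apply, Pi.single_apply, eq_comm] using
    congrFun (congrFun (mul_adjugate A) y) j

theorem det_mul_desnanot_jacobi {N : ℕ} (A : Matrix (Fin (N + 2)) (Fin (N + 2)) R)
    (e : Fin (N + 1)) :
    A.det * (A.det *
        (A.submatrix (fun j : Fin N => j.succ.succ) (fun j => (e.succAbove j).succ)).det) =
      A.det * ((A.submatrix Fin.succ Fin.succ).det *
          (A.submatrix (1 : Fin (N + 2)).succAbove e.succ.succAbove).det -
        (A.submatrix Fin.succ e.succ.succAbove).det *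
          (A.submatrix (1 : Fin (N + 2)).succAbove Fin.succ).det) := by
  set a := A.det
  set C := ((1 : Matrix (Fin (N + 2)) (Fin (N + 2)) R).updateCol e.succ
    (fun x => A.adjugate x 1)).updateCol 0 (fun x => A.adjugate x 0)
  set B := (A.updateCol e.succ (Pi.single 1 a)).updateCol 0 (Pi.single 0 a)
  have hAC : A * C = B := by
    simp only [B, C, mul_updateCol, mul_one, mulVec_adjugate_col, a]
  have hsub : (A.updateCol e.succ (Pi.single 1 a)).submatrix Fin.succ Fin.succ =
      (A.submatrix Fin.succ Fin.succ).updateCol e (Pi.single 0 a) := by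
    ext x y
    have hone : x.succ = 1 ↔ x = 0 := by rw [← Fin.succ_zero_eq_one, Fin.succ_inj]
    simp [updateCol_apply, Pi.single_apply, hone]
  have hdetB : B.det = (-1) ^ (e : ℕ) * a * (a *
        (A.submatrix (fun j : Fin N => j.succ.succ) (fun j => (e.succAbove j).succ)).det) := by
    rw [det_updateCol_single, Fin.succAbove_zero, hsub, det_updateCol_single]
    simp only [Fin.val_zero, add_zero, pow_zero, one_mul, zero_add, Fin.succAbove_zero,
      submatrix_submatrix, Function.comp_def]
    ring
  have hdetC : C.det = (-1) ^ (e : ℕ) * ((A.submatrix Fin.succ Fin.succ).det *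
          (A.submatrix (1 : Fin (N + 2)).succAbove e.succ.succAbove).det -
        (A.submatrix Fin.succ e.succ.succAbove).det *
          (A.submatrix (1 : Fin (N + 2)).succAbove Fin.succ).det) := by
    rw [det_one_updateCol_updateCol (Fin.succ_ne_zero e).symm]
    simp only [adjugate_fin_succ_eq_det_submatrix, Fin.succAbove_zero, Fin.val_zero, Fin.val_one,
      Fin.val_succ, pow_succ, pow_zero]
    ring
  have key := congrArg det hAC
  rw [det_mul, hdetB, hdetC] at key
  refine ((isUnit_neg_one (α := R)).pow (e : ℕ)).mul_left_cancel ?_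
  linear_combination -key

theorem desnanot_jacobi_s5 {N : ℕ} (A : Matrix (Fin (N + 2)) (Fin (N + 2)) R) (e : Fin (N + 1)) :
    A.det * (A.submatrix (fun j : Fin N => j.succ.succ) (fun j => (e.succAbove j).succ)).det =
      (A.submatrix Fin.succ Fin.succ).det *
          (A.submatrix (1 : Fin (N + 2)).succAbove e.succ.succAbove).det -
        (A.submatrix Fin.succ e.succ.succAbove).det *
          (A.submatrix (1 : Fin (N + 2)).succAbove Fin.succ).det := by
  have generic := mul_left_cancel₀ (det_mvPolynomialX_ne_zero (Fin (N + 2)) ℤ)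
    (det_mul_desnanot_jacobi (mvPolynomialX (Fin (N + 2)) (Fin (N + 2)) ℤ) e)
  rw [← mvPolynomialX_mapMatrix_aeval ℤ A]
  simpa only [map_mul, map_sub, AlgHom.map_det, AlgHom.mapMatrix_apply, submatrix_map] using
    congrArg (MvPolynomial.aeval fun p : Fin (N + 2) × Fin (N + 2) => A p.1 p.2) generic

end Matrix

theorem detXY_eq_det_submatrix {F : Type*} [Field F] {n m p : ℕ} (X Y : Matrix (Fin n) (Fin n) F)
    (px : ℕ) (row colX colY : ℕ → ℕ) (M : Matrix (Fin m) (Fin m) F) (r c : Fin p → Fin m)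
    (h : ∀ a b, M (r a) (c b) =
      if (b : ℕ) < px then ent X (row a) (colX b) else ent Y (row a) (colY (b - px))) :
    detXY X Y p px row colX colY = (M.submatrix r c).det := by
  unfold detXY
  congr 1
  ext a b
  exact (h a b).symm

theorem statement5_general {F : Type*} [Field F] {n : ℕ} (X Y : Matrix (Fin n) (Fin n) F)
    (s k i : ℕ) (hi2 : i ≤ n - s) :
    detXY X Y (n - s + 1) i (fun t => s + t) (fun t => n - i + 1 + t) (fun t => s + i + t) *
      detXY X Y (n - s + 1) (i + 1) (fun t => if t = 0 then s - k - 1 else s + t)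
        (fun t => n - i + t) (fun t => s + i + 1 + t)
    = detXY X Y (n - s + 2) (i + 1) (fun t => if t = 0 then s - k - 1 else s + t - 1)
          (fun t => n - i + t) (fun t => s + i + t) *
        detXY X Y (n - s) i (fun t => s + 1 + t) (fun t => n - i + 1 + t)
          (fun t => s + i + 1 + t)
      + detXY X Y (n - s + 1) (i + 1) (fun t => s + t) (fun t => n - i + t)
          (fun t => s + i + 1 + t) *
        detXY X Y (n - s + 1) i (fun t => if t = 0 then s - k - 1 else s + t)
          (fun t => n - i + 1 + t) (fun t => s + i + t) := by
  generalize n - s = N at hi2 ⊢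
  let M : Matrix (Fin (N + 2)) (Fin (N + 2)) F := of fun a b =>
    if (b : ℕ) < i + 1 then ent X (if (a : ℕ) = 0 then s - k - 1 else s + a - 1) (n - i + b)
    else ent Y (if (a : ℕ) = 0 then s - k - 1 else s + a - 1) (s + i + (b - (i + 1)))
  have J := eq_sub_iff_add_eq.mp (desnanot_jacobi_s5 M ⟨i, by omega⟩)
  convert J.symm using 3
  all_goals
    refine detXY_eq_det_submatrix _ _ _ _ _ _ M _ _ fun a b => ?_
    have ha := a.isLt
    have hb := b.isLt
    simp only [M, of_apply, Fin.val_succ, Fin.val_succAbove_eq_ite, Fin.val_one,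
      Nat.lt_one_iff, Nat.add_one_ne_zero, if_false] <;>
    split_ifs <;> first | contradiction | (congr 1 <;> omega)

/-- The identity behind the mutation at `f_{i,n-s-i+1}` after the sequence
`B_{s-k} → ⋯ → B_{s-1}`:
`det [X^{[n−i+1,n]} | Y^{[s+i,n]}]_{[s,n]} · det [X^{[n−i,n]} | Y^{[s+i+1,n]}]_{{s−k−1}∪[s+1,n]}
 = det [X^{[n−i,n]} | Y^{[s+i,n]}]_{{s−k−1}∪[s,n]} · det [X^{[n−i+1,n]} | Y^{[s+i+1,n]}]_{[s+1,n]}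
 + det [X^{[n−i,n]} | Y^{[s+i+1,n]}]_{[s,n]} · det [X^{[n−i+1,n]} | Y^{[s+i,n]}]_{{s−k−1}∪[s+1,n]}`. -/
theorem statement5 {F : Type*} [Field F] {n : ℕ} (X Y : Matrix (Fin n) (Fin n) F)
    (s k i : ℕ) (hs1 : 2 ≤ s) (hs2 : s ≤ n - 1) (hk : k ≤ s - 2)
    (hi1 : 1 ≤ i) (hi2 : i ≤ n - s) :
    detXY X Y (n - s + 1) i (fun t => s + t) (fun t => n - i + 1 + t) (fun t => s + i + t) *
      detXY X Y (n - s + 1) (i + 1) (fun t => if t = 0 then s - k - 1 else s + t)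
        (fun t => n - i + t) (fun t => s + i + 1 + t)
    = detXY X Y (n - s + 2) (i + 1) (fun t => if t = 0 then s - k - 1 else s + t - 1)
          (fun t => n - i + t) (fun t => s + i + t) *
        detXY X Y (n - s) i (fun t => s + 1 + t) (fun t => n - i + 1 + t)
          (fun t => s + i + 1 + t)
      + detXY X Y (n - s + 1) (i + 1) (fun t => s + t) (fun t => n - i + t)
          (fun t => s + i + 1 + t) *
        detXY X Y (n - s + 1) i (fun t => if t = 0 then s - k - 1 else s + t)
          (fun t => n - i + 1 + t) (fun t => s + i + t) :=
  statement5_general X Y s k i hi2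
end

section
/- Let Y be an n×n matrix over a field and let s, t, i be integers with s ≥ 2, t ≥ 2, i ≥ 1 and s+t+i ≤ n. Then det Y^{[n−t−i,n]}_{[s−1,s+t−2]∪[s+t,s+t+i]} · det Y^{[n−t−i+1,n]}_{[s−1,s+t−3]∪[s+t−1,s+t−1+i]} = det Y^{[n−t−i+1,n]}_{[s−1,s+t−2]∪[s+t,s+t+i−1]} · det Y^{[n−t−i,n]}_{[s−1,s+t−3]∪[s+t−1,s+t+i]} + det Y^{[n−t−i+1,n]}_{[s−1,s+t−3]∪[s+t,s+t+i]} · det Y^{[n−t−i,n]}_{[s−1,s+t+i−1]}. -/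
open Matrix

theorem Fin.comp_eq_insertNth {α : Type*} {m : ℕ} (X : ℕ → α) (r c : ℕ → ℕ) {a p : ℕ}
    (hp : p ≤ m) (hr : ∀ u ≤ m, r u = if u < p then c u else if u = p then a else c (u - 1)) :
    (fun k : Fin (m + 1) => X (r k))
      = Fin.insertNth ⟨p, Nat.lt_succ_of_le hp⟩ (X a) fun k : Fin m => X (c k) := by
  funext k
  obtain rfl | ⟨j, rfl⟩ := Fin.eq_self_or_eq_succAbove ⟨p, Nat.lt_succ_of_le hp⟩ k
  · simp [hr p hp]
  · rw [Fin.insertNth_apply_succAbove, hr _ (Nat.le_of_lt_succ (Fin.is_lt _))]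
    rcases lt_or_ge (j : ℕ) p with hj | hj
    · rw [Fin.succAbove_of_castSucc_lt _ _ hj]
      simp [hj]
    · rw [Fin.succAbove_of_le_castSucc _ _ hj]
      simp [Nat.not_lt.mpr (Nat.le_succ_of_le hj), Nat.ne_of_gt (Nat.lt_succ_of_le hj)]

namespace Matrix

variable {R : Type*} [CommRing R]

theorem sum_det_updateRow_smul {n : Type*} [Fintype n] [DecidableEq n]
    (V : Matrix n n R) (u : n → R) :
    ∑ k, (V.updateRow k u).det • V k = V.det • u := by
  simpa only [mulVec_transpose, vecMul_eq_sum, det_transpose, cramer_transpose_apply]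
    using mulVec_cramer Vᵀ u

theorem det_mul_det_updateRow_eq_sum {n : Type*} [Fintype n] [DecidableEq n]
    (V U : Matrix n n R) (j : n) (u : n → R) :
    V.det * (U.updateRow j u).det
      = ∑ k, (V.updateRow k u).det * (U.updateRow j (V k)).det := by
  let L := (detRowAlternating : (n → R) [⋀^n]→ₗ[R] R).toMultilinearMap.toLinearMap U j
  have hL : ∀ v, L v = (U.updateRow j v).det := fun _ => rfl
  simp only [← hL, ← smul_eq_mul, ← map_smul, ← map_sum, sum_det_updateRow_smul]

omit [CommRing R] in
theorem updateRow_of {m n : Type*} [DecidableEq m] (f : m → n → R) (i : m) (b : n → R) :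
    (of f).updateRow i b = of (Function.update f i b) :=
  rfl

/-- The three-term Plücker relation. In the exchange identity for `V = [z, w, C]` and
`U = [x, y, C]` at row `0`, the terms `C k` vanish because `C k` is already a row of `U`. -/
theorem det_cons_cons_mul_det_cons_cons {m : ℕ} (C : Fin m → Fin (m + 2) → R)
    (x y z w : Fin (m + 2) → R) :
    (of (Fin.cons z (Fin.cons w C))).det * (of (Fin.cons x (Fin.cons y C))).det
      = (of (Fin.cons x (Fin.cons w C))).det * (of (Fin.cons z (Fin.cons y C))).det
        + (of (Fin.cons z (Fin.cons x C))).det * (of (Fin.cons w (Fin.cons y C))).det := by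
  set V : Matrix (Fin (m + 2)) (Fin (m + 2)) R := of (Fin.cons z (Fin.cons w C))
  have repeated (k : Fin m) : (of (Fin.cons (V k.succ.succ) (Fin.cons y C))).det = 0 :=
    det_zero_of_row_eq (i := 0) (j := k.succ.succ) (Fin.succ_ne_zero _).symm rfl
  have h := det_mul_det_updateRow_eq_sum V (of (Fin.cons x (Fin.cons y C))) 0 x
  simp only [Fin.sum_univ_succ, V, updateRow_of, Fin.update_cons_zero, ← Fin.cons_update,
    repeated, mul_zero, Finset.sum_const_zero, add_zero] at h
  exact h

theorem det_of_insertNth {m : ℕ} (p : Fin (m + 1)) (a : Fin (m + 1) → R)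
    (C : Fin m → Fin (m + 1) → R) :
    (of (p.insertNth a C)).det = (-1) ^ (p : ℕ) * (of (Fin.cons a C)).det := by
  rw [← Fin.cons_comp_cycleRange]
  have h := det_permute p.cycleRange (of (Fin.cons a C))
  simp only [Fin.sign_cycleRange] at h
  push_cast at h
  exact h

theorem det_of_insertNth_insertNth {m : ℕ} (p : Fin (m + 2)) (q : Fin (m + 1))
    (a b : Fin (m + 2) → R) (C : Fin m → Fin (m + 2) → R) :
    (of (p.insertNth a (q.insertNth b C))).det
      = (-1) ^ ((p : ℕ) + q) * (of (Fin.cons a (Fin.cons b C))).det := by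
  have hswap : (Fin.cons b (Fin.cons a C) : Fin (m + 2) → Fin (m + 2) → R)
      = Fin.insertNth 1 a (Fin.cons b C) := by
    rw [← Fin.succ_zero_eq_one, Fin.insertNth_succ_cons, Fin.insertNth_zero']
  rw [det_of_insertNth, ← Fin.insertNth_succ_cons, det_of_insertNth, hswap, det_of_insertNth]
  simp only [Fin.val_succ, Fin.val_one]
  ring

theorem det_of_cons_single_zero {m : ℕ} (C : Fin m → Fin (m + 1) → R) :
    (of (Fin.cons (Pi.single 0 1) C)).det = (of fun k => Fin.tail (C k)).det := by
  have minor : (of (Fin.cons (Pi.single 0 1) C)).submatrix Fin.succ Fin.succ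
      = of fun k => Fin.tail (C k) := rfl
  simp [det_succ_row_zero, Fin.sum_univ_succ, minor]

theorem det_of_comp_eq_det_cons_cons {m : ℕ} (X : ℕ → Fin (m + 2) → R) (r c : ℕ → ℕ)
    {a b p q : ℕ} (hpq : p < q) (hq : q ≤ m + 1)
    (hr : ∀ u ≤ m + 1, r u = if u < p then c u else if u = p then a else if u < q then c (u - 1)
      else if u = q then b else c (u - 2)) :
    (of fun k : Fin (m + 2) => X (r k)).det
      = (-1) ^ (p + q + 1) * (of (Fin.cons (X a) (Fin.cons (X b) fun k : Fin m => X (c k)))).det := by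
  let c' : ℕ → ℕ := fun u => if u < q - 1 then c u else if u = q - 1 then b else c (u - 1)
  rw [Fin.comp_eq_insertNth X r c' (a := a) (p := p) (by omega)
      (fun u hu => by simp only [c', hr u hu]; split_ifs <;> first | rfl | omega),
    Fin.comp_eq_insertNth X c' c (a := b) (p := q - 1) (by omega) (fun u _ => rfl),
    det_of_insertNth_insertNth, Fin.val_mk, Fin.val_mk,
    show p + q + 1 = p + (q - 1) + 2 by omega, pow_add _ _ 2]
  ring

theorem det_of_tail_comp_eq_det_cons_single_zero {m : ℕ} (X : ℕ → Fin (m + 2) → R)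
    (r c : ℕ → ℕ) {a p : ℕ} (hp : p ≤ m)
    (hr : ∀ u ≤ m, r u = if u < p then c u else if u = p then a else c (u - 1)) :
    (of fun k : Fin (m + 1) => Fin.tail (X (r k))).det
      = (-1) ^ p * (of (Fin.cons (Pi.single 0 1) (Fin.cons (X a) fun k : Fin m => X (c k)))).det := by
  rw [Fin.comp_eq_insertNth (fun u => Fin.tail (X u)) r c hp hr, det_of_insertNth,
    det_of_cons_single_zero]
  congr 3
  funext k
  cases k using Fin.cases <;> rfl

end Matrix

def rowSegment {F : Type*} [Zero F] {r c : ℕ} (A : Matrix (Fin r) (Fin c) F) (c₀ N a : ℕ) :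
    Fin N → F :=
  fun l => ent A a (c₀ + l)

theorem subdet_eq_det_rowSegment {F : Type*} [Field F] {r c : ℕ} (A : Matrix (Fin r) (Fin c) F)
    (N : ℕ) (row : ℕ → ℕ) (c₀ : ℕ) :
    subdet A N row (fun u => c₀ + u) = (of fun k : Fin N => rowSegment A c₀ N (row k)).det :=
  rfl

theorem subdet_eq_det_tail_rowSegment {F : Type*} [Field F] {r c : ℕ}
    (A : Matrix (Fin r) (Fin c) F) (N : ℕ) (row : ℕ → ℕ) (c₀ : ℕ) :
    subdet A N row (fun u => c₀ + 1 + u)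
      = (of fun k : Fin N => Fin.tail (rowSegment A c₀ (N + 1) (row k))).det := by
  unfold subdet
  congr with k l
  simp only [rowSegment, Fin.tail, Fin.val_succ]
  ring_nf

theorem statement8_general {F : Type*} [Field F] {n : ℕ} (Y : Matrix (Fin n) (Fin n) F)
    (s t i : ℕ) (hs : 2 ≤ s) (ht : 2 ≤ t) :
    subdet Y (t + i + 1) (fun u => if u < t then s - 1 + u else s + u)
        (fun u => n - t - i + u) *
      subdet Y (t + i) (fun u => if u < t - 1 then s - 1 + u else s + u)
        (fun u => n - t - i + 1 + u)
    = subdet Y (t + i) (fun u => if u < t then s - 1 + u else s + u)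
          (fun u => n - t - i + 1 + u) *
        subdet Y (t + i + 1) (fun u => if u < t - 1 then s - 1 + u else s + u)
          (fun u => n - t - i + u)
      + subdet Y (t + i) (fun u => if u < t - 1 then s - 1 + u else s + u + 1)
          (fun u => n - t - i + 1 + u) *
        subdet Y (t + i + 1) (fun u => s - 1 + u) (fun u => n - t - i + u) := by
  obtain ⟨m, hm⟩ : ∃ m, t + i = m + 1 := ⟨t + i - 1, by omega⟩
  rw [hm]
  set r₁ : ℕ → ℕ := fun u => if u < t then s - 1 + u else s + u
  set r₂ : ℕ → ℕ := fun u => if u < t - 1 then s - 1 + u else s + u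
  set r₃ : ℕ → ℕ := fun u => if u < t - 1 then s - 1 + u else s + u + 1
  set r₄ : ℕ → ℕ := fun u => s - 1 + u
  simp only [subdet_eq_det_tail_rowSegment]
  simp only [subdet_eq_det_rowSegment]
  set X := rowSegment Y (n - t - i) (m + 1 + 1)
  -- `r₃` lists the common rows `C`; the rows `α, β, μ` are `s + t - 2`, `s + t - 1`, `s + t + i`.
  rw [det_of_comp_eq_det_cons_cons X r₁ r₃ (a := s + t - 2) (b := s + t + i) (p := t - 1)
      (q := m + 1) ?_ ?_ ?_,
    det_of_comp_eq_det_cons_cons X r₂ r₃ (a := s + t - 1) (b := s + t + i) (p := t - 1)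
      (q := m + 1) ?_ ?_ ?_,
    det_of_comp_eq_det_cons_cons X r₄ r₃ (a := s + t - 2) (b := s + t - 1) (p := t - 1)
      (q := t - 1 + 1) ?_ ?_ ?_,
    det_of_tail_comp_eq_det_cons_single_zero X r₁ r₃ (a := s + t - 2) (p := t - 1) ?_ ?_,
    det_of_tail_comp_eq_det_cons_single_zero X r₂ r₃ (a := s + t - 1) (p := t - 1) ?_ ?_,
    det_of_tail_comp_eq_det_cons_single_zero X r₃ r₃ (a := s + t + i) (p := m) ?_ ?_]
  · linear_combination (-1 : F) ^ (2 * (t - 1) + m + 2) * det_cons_cons_mul_det_cons_cons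
      (fun k => X (r₃ k)) (X (s + t - 2)) (X (s + t + i)) (Pi.single 0 1) (X (s + t - 1))
  all_goals first
    | omega
    | intro u _; simp only [r₁, r₂, r₃, r₄]; split_ifs <;> omega

/-- Desnanot–Jacobi identity behind the mutation at `h_{s,n-i}^{(t-1)}` in the sequence
`V_{s,t}`:
`det Y^{[n−t−i,n]}_{[s−1,s+t−2]∪[s+t,s+t+i]} · det Y^{[n−t−i+1,n]}_{[s−1,s+t−3]∪[s+t−1,s+t−1+i]}
 = det Y^{[n−t−i+1,n]}_{[s−1,s+t−2]∪[s+t,s+t+i−1]} · det Y^{[n−t−i,n]}_{[s−1,s+t−3]∪[s+t−1,s+t+i]}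
 + det Y^{[n−t−i+1,n]}_{[s−1,s+t−3]∪[s+t,s+t+i]} · det Y^{[n−t−i,n]}_{[s−1,s+t+i−1]}`. -/
theorem statement8 {F : Type*} [Field F] {n : ℕ} (Y : Matrix (Fin n) (Fin n) F)
    (s t i : ℕ) (hs : 2 ≤ s) (ht : 2 ≤ t) (hi : 1 ≤ i) (h : s + t + i ≤ n) :
    subdet Y (t + i + 1) (fun u => if u < t then s - 1 + u else s + u)
        (fun u => n - t - i + u) *
      subdet Y (t + i) (fun u => if u < t - 1 then s - 1 + u else s + u)
        (fun u => n - t - i + 1 + u)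
    = subdet Y (t + i) (fun u => if u < t then s - 1 + u else s + u)
          (fun u => n - t - i + 1 + u) *
        subdet Y (t + i + 1) (fun u => if u < t - 1 then s - 1 + u else s + u)
          (fun u => n - t - i + u)
      + subdet Y (t + i) (fun u => if u < t - 1 then s - 1 + u else s + u + 1)
          (fun u => n - t - i + 1 + u) *
        subdet Y (t + i + 1) (fun u => s - 1 + u) (fun u => n - t - i + u) :=
  statement8_general Y s t i hs ht
end

section
/- Let Y be an n×n matrix over a field and let s, t, k, i be integers with s ≥ 2, t ≥ 2, k ≥ 1, i ≥ 1 and s+t+i+k ≤ n. Then det Y^{[n−t−i,n]}_{[s−1,s+t−2]∪[s+t+k,s+t+i+k]} · det Y^{[n−t−i+1,n]}_{[s−1,s+t−3]∪[s+t−1+k,s+t−1+i+k]} = det Y^{[n−t−i,n]}_{[s−1,s+t−2]∪[s+t+k−1,s+t+i+k−1]} · det Y^{[n−t−i+1,n]}_{[s−1,s+t−3]∪[s+t+k,s+t+i+k]} + det Y^{[n−t−i+1,n]}_{[s−1,s+t−2]∪[s+t+k,s+t+i+k−1]} · det Y^{[n−t−i,n]}_{[s−1,s+t−3]∪[s+t−1+k,s+t+i+k]}.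 -/
namespace Fin

theorem val_succAbove_s10 {n : ℕ} (p : Fin (n + 1)) (j : Fin n) :
    (p.succAbove j : ℕ) = if (j : ℕ) < p then (j : ℕ) else j + 1 := by
  rcases lt_or_ge (castSucc j) p with h | h
  · rw [succAbove_of_castSucc_lt _ _ h, val_castSucc]
    exact (if_pos h).symm
  · rw [succAbove_of_le_castSucc _ _ h, val_succ]
    exact (if_neg (not_lt.mpr h)).symm

variable {m : ℕ}

/-- The increasing enumeration of the complement of `{a, b}` when `a < b`. -/
def skipTwo (a b : Fin (m + 2)) (j : Fin m) : Fin (m + 2) :=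
  ⟨if (j : ℕ) < a then (j : ℕ) else if (j : ℕ) + 1 < b then (j : ℕ) + 1 else (j : ℕ) + 2,
    by split_ifs <;> omega⟩

/-- The increasing enumeration of the complement of `{a, b, c}` when `a < b < c`. -/
def skipThree (a b c : Fin (m + 3)) (j : Fin m) : Fin (m + 3) :=
  ⟨if (j : ℕ) < a then (j : ℕ) else if (j : ℕ) + 1 < b then (j : ℕ) + 1
    else if (j : ℕ) + 2 < c then (j : ℕ) + 2 else (j : ℕ) + 3, by split_ifs <;> omega⟩

theorem val_skipTwo (a b : Fin (m + 2)) (j : Fin m) :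
    (skipTwo a b j : ℕ) =
      if (j : ℕ) < a then (j : ℕ) else if (j : ℕ) + 1 < b then (j : ℕ) + 1 else (j : ℕ) + 2 :=
  rfl

theorem val_skipThree (a b c : Fin (m + 3)) (j : Fin m) :
    (skipThree a b c j : ℕ) = if (j : ℕ) < a then (j : ℕ) else if (j : ℕ) + 1 < b then (j : ℕ) + 1
      else if (j : ℕ) + 2 < c then (j : ℕ) + 2 else (j : ℕ) + 3 :=
  rfl

variable {a b c : Fin (m + 3)} {p : Fin (m + 1)}

theorem exists_skipThree_eq (hab : a < b) (hbc : b < c) {x : Fin (m + 3)} (hxa : x ≠ a)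
    (hxb : x ≠ b) (hxc : x ≠ c) : ∃ j, skipThree a b c j = x := by
  rw [Fin.lt_def] at hab hbc
  rw [Ne, Fin.ext_iff] at hxa hxb hxc
  have hj : (if (x : ℕ) < a then (x : ℕ) else if (x : ℕ) < b then x - 1
      else if (x : ℕ) < c then x - 2 else x - 3) < m := by
    have := x.isLt
    split_ifs <;> omega
  exact ⟨⟨_, hj⟩, Fin.ext (by rw [val_skipThree]; dsimp only; split_ifs <;> omega)⟩

theorem skipTwo_comp_succAbove_of_val_eq (hab : a < b) (hp : (p : ℕ) = a) :
    skipTwo b c p = a ∧ skipTwo b c ∘ p.succAbove = skipThree a b c := by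
  rw [Fin.lt_def] at hab
  refine ⟨Fin.ext ?_, funext fun j => Fin.ext ?_⟩ <;>
    simp only [Function.comp_apply, val_skipTwo, val_skipThree, val_succAbove_s10] <;>
    split_ifs <;> omega

theorem skipTwo_comp_succAbove_of_val_add_one_eq (hab : a < b) (hbc : b < c)
    (hp : (p : ℕ) + 1 = b) :
    skipTwo a c p = b ∧ skipTwo a c ∘ p.succAbove = skipThree a b c := by
  rw [Fin.lt_def] at hab hbc
  refine ⟨Fin.ext ?_, funext fun j => Fin.ext ?_⟩ <;>
    simp only [Function.comp_apply, val_skipTwo, val_skipThree, val_succAbove_s10] <;>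
    split_ifs <;> omega

theorem skipTwo_comp_succAbove_of_val_add_two_eq (hab : a < b) (hbc : b < c)
    (hp : (p : ℕ) + 2 = c) :
    skipTwo a b p = c ∧ skipTwo a b ∘ p.succAbove = skipThree a b c := by
  rw [Fin.lt_def] at hab hbc
  refine ⟨Fin.ext ?_, funext fun j => Fin.ext ?_⟩ <;>
    simp only [Function.comp_apply, val_skipTwo, val_skipThree, val_succAbove_s10] <;>
    split_ifs <;> omega

end Fin

namespace Matrix

variable {R : Type*} [CommRing R] {m : ℕ}

/-- The generalized cross product of the rows of `D`: `u ⬝ᵥ crossVec D` is the determinant of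
`D` with the row `u` put on top. -/
def crossVec (D : Matrix (Fin m) (Fin (m + 1)) R) : Fin (m + 1) → R :=
  fun j => (-1) ^ (j : ℕ) * (D.submatrix id j.succAbove).det

theorem det_eq_neg_one_pow_mul_dotProduct_crossVec (M : Matrix (Fin (m + 1)) (Fin (m + 1)) R)
    (i : Fin (m + 1)) :
    M.det = (-1) ^ (i : ℕ) * (M i ⬝ᵥ crossVec (M.submatrix i.succAbove id)) := by
  rw [det_succ_row M i, dotProduct, Finset.mul_sum]
  refine Finset.sum_congr rfl fun j _ => ?_
  simp only [crossVec, submatrix_submatrix, Function.comp_id, Function.id_comp, pow_add]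
  ring

theorem dotProduct_crossVec_eq_zero (D : Matrix (Fin m) (Fin (m + 1)) R) (p : Fin m) :
    D p ⬝ᵥ crossVec D = 0 := by
  let M : Matrix (Fin (m + 1)) (Fin (m + 1)) R := D.submatrix (vecCons p id) id
  have hrow : M 0 = M p.succ := rfl
  have hM : M.submatrix (Fin.succAbove 0) id = D := rfl
  have h := det_eq_neg_one_pow_mul_dotProduct_crossVec M 0
  rw [det_zero_of_row_eq (Fin.succ_ne_zero p).symm hrow, hM, Fin.val_zero, pow_zero,
    one_mul] at h
  exact h.symm

theorem det_submatrix_eq_neg_one_pow_mul_mulVec_crossVec {k l : ℕ}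
    (A : Matrix (Fin k) (Fin l) R) {e : Fin (m + 1) → Fin k} (f : Fin (m + 1) → Fin l)
    (p : Fin (m + 1)) {d : Fin m → Fin k} (hd : e ∘ p.succAbove = d) :
    (A.submatrix e f).det =
      (-1) ^ (p : ℕ) * (A.submatrix id f *ᵥ crossVec (A.submatrix d f)) (e p) := by
  rw [det_eq_neg_one_pow_mul_dotProduct_crossVec _ p, submatrix_submatrix, Function.comp_id, hd]
  rfl

theorem sum_neg_one_pow_mul_mulVec_mul_det_submatrix_succAbove
    (A : Matrix (Fin (m + 1)) (Fin m) R) (v : Fin m → R) :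
    ∑ x : Fin (m + 1), (-1) ^ (x : ℕ) * (A *ᵥ v) x * (A.submatrix x.succAbove id).det = 0 := by
  let M : Matrix (Fin (m + 1)) (Fin (m + 1)) R :=
    of fun x => (Fin.cons ((A *ᵥ v) x) (A x) : Fin (m + 1) → R)
  have hM : M.updateCol 0 (fun x => ∑ j, (Fin.cons 0 v : Fin (m + 1) → R) j * M x j) = M := by
    ext x j
    refine Fin.cases ?_ (fun _ => ?_) j
    · simp [M, Fin.sum_univ_succ, mulVec, dotProduct, mul_comm]
    · simp [M]
  have hdet : M.det = 0 := by
    simpa [hM] using det_updateCol_sum M 0 (Fin.cons 0 v)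
  rw [← hdet, det_succ_column_zero]
  refine Finset.sum_congr rfl fun x _ => ?_
  congr 2

theorem sum_three_neg_one_pow_mul_mulVec_crossVec_mul_det_eq_zero
    (A : Matrix (Fin (m + 3)) (Fin (m + 2)) R) {a b c : Fin (m + 3)} (hab : a < b) (hbc : b < c) :
    let v := A.submatrix id Fin.succ *ᵥ crossVec (A.submatrix (Fin.skipThree a b c) Fin.succ)
    (-1) ^ (a : ℕ) * v a * (A.submatrix a.succAbove id).det +
      ((-1) ^ (b : ℕ) * v b * (A.submatrix b.succAbove id).det +
        (-1) ^ (c : ℕ) * v c * (A.submatrix c.succAbove id).det) = 0 := by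
  intro v
  set w := crossVec (A.submatrix (Fin.skipThree a b c) Fin.succ)
  have hv : A *ᵥ Fin.cons 0 w = v := by
    ext x
    simp [v, w, mulVec, dotProduct, Fin.sum_univ_succ]
  have hvanish : ∀ x ∉ ({a, b, c} : Finset (Fin (m + 3))), v x = 0 := by
    intro x hx
    simp only [Finset.mem_insert, Finset.mem_singleton, not_or] at hx
    obtain ⟨j, rfl⟩ := Fin.exists_skipThree_eq hab hbc hx.1 hx.2.1 hx.2.2
    exact dotProduct_crossVec_eq_zero (A.submatrix (Fin.skipThree a b c) Fin.succ) j
  have hsum := sum_neg_one_pow_mul_mulVec_mul_det_submatrix_succAbove A (Fin.cons 0 w)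
  rw [Fin.lt_def] at hab hbc
  rwa [hv, ← Finset.sum_subset (Finset.subset_univ {a, b, c})
    (fun x _ hx => by rw [hvanish x hx, mul_zero, zero_mul]),
    Finset.sum_insert (by simp [← Fin.val_ne_iff]; omega),
    Finset.sum_insert (by simp [← Fin.val_ne_iff]; omega), Finset.sum_singleton] at hsum

theorem plucker_three_term (A : Matrix (Fin (m + 3)) (Fin (m + 2)) R) {a b c : Fin (m + 3)}
    (hab : a < b) (hbc : b < c) :
    (A.submatrix b.succAbove id).det * (A.submatrix (Fin.skipTwo a c) Fin.succ).det =
      (A.submatrix c.succAbove id).det * (A.submatrix (Fin.skipTwo a b) Fin.succ).det +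
        (A.submatrix a.succAbove id).det * (A.submatrix (Fin.skipTwo b c) Fin.succ).det := by
  have hsum := sum_three_neg_one_pow_mul_mulVec_crossVec_mul_det_eq_zero A hab hbc
  have hab' := Fin.lt_def.mp hab
  have hbc' := Fin.lt_def.mp hbc
  have hc := c.isLt
  obtain ⟨hpa, hda⟩ := Fin.skipTwo_comp_succAbove_of_val_eq (c := c) (p := ⟨a, by omega⟩) hab rfl
  obtain ⟨hpb, hdb⟩ := Fin.skipTwo_comp_succAbove_of_val_add_one_eq (p := ⟨b - 1, by omega⟩)
    hab hbc (by dsimp only; omega)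
  obtain ⟨hpc, hdc⟩ := Fin.skipTwo_comp_succAbove_of_val_add_two_eq (p := ⟨c - 2, by omega⟩)
    hab hbc (by dsimp only; omega)
  have hBC := det_submatrix_eq_neg_one_pow_mul_mulVec_crossVec A Fin.succ _ hda
  have hAC := det_submatrix_eq_neg_one_pow_mul_mulVec_crossVec A Fin.succ _ hdb
  have hAB := det_submatrix_eq_neg_one_pow_mul_mulVec_crossVec A Fin.succ _ hdc
  rw [hpa] at hBC
  rw [hpb] at hAC
  rw [hpc] at hAB
  have hσb : (-1 : R) ^ (b : ℕ) = -(-1) ^ ((b : ℕ) - 1) := by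
    rw [show (b : ℕ) = (b - 1) + 1 by omega, pow_succ]
    simp
  have hσc : (-1 : R) ^ (c : ℕ) = (-1) ^ ((c : ℕ) - 2) := by
    rw [show (c : ℕ) = (c - 2) + 2 by omega, pow_add]
    simp
  rw [hBC, hAC, hAB]
  rw [hσb, hσc] at hsum
  linear_combination -hsum

end Matrix

theorem statement10_general {F : Type*} [Field F] {n : ℕ} (Y : Matrix (Fin n) (Fin n) F)
    (s t k i : ℕ) (ht : 2 ≤ t) :
    subdet Y (t + i + 1) (fun u => if u < t then s - 1 + u else s + k + u)
        (fun u => n - t - i + u) *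
      subdet Y (t + i) (fun u => if u < t - 1 then s - 1 + u else s + k + u)
        (fun u => n - t - i + 1 + u)
    = subdet Y (t + i + 1) (fun u => if u < t then s - 1 + u else s + k + u - 1)
          (fun u => n - t - i + u) *
        subdet Y (t + i) (fun u => if u < t - 1 then s - 1 + u else s + k + u + 1)
          (fun u => n - t - i + 1 + u)
      + subdet Y (t + i) (fun u => if u < t then s - 1 + u else s + k + u)
          (fun u => n - t - i + 1 + u) *
        subdet Y (t + i + 1) (fun u => if u < t - 1 then s - 1 + u else s + k + u)
          (fun u => n - t - i + u) := by
  obtain ⟨m, hm⟩ : ∃ m, t + i = m + 1 := ⟨t + i - 1, by omega⟩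
  let A : Matrix (Fin (m + 3)) (Fin (m + 2)) F := Matrix.of fun u v =>
    ent Y (if (u : ℕ) < t then s - 1 + u else s + k + u - 1) (n - t - i + v)
  let a : Fin (m + 3) := ⟨t - 1, by omega⟩
  have P := Matrix.plucker_three_term A (a := a) (b := ⟨t, by omega⟩) (c := Fin.last _)
    (Fin.lt_def.mpr (by dsimp only [a]; omega)) (Fin.lt_def.mpr (by simp; omega))
  rw [mul_comm (A.submatrix a.succAbove id).det] at P
  simp only [subdet]
  rw [show t + i + 1 = m + 2 by omega, hm]
  convert P using 3 <;> (try refine congrArg Matrix.det ?_) <;> ext u v <;>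
    simp only [A, a, Matrix.submatrix_apply, Matrix.of_apply, id, Fin.val_succAbove_s10,
      Fin.val_skipTwo, Fin.val_succ, Fin.val_last] <;>
    congr 1 <;> (try split_ifs) <;> omega

/-- Desnanot–Jacobi identity behind the mutation at `h_{s+k,n-i}^{(t-1)}` in the sequence
`V_{s,t}` (for `i > 0`, `k > 0`):
`det Y^{[n−t−i,n]}_{[s−1,s+t−2]∪[s+t+k,s+t+i+k]} · det Y^{[n−t−i+1,n]}_{[s−1,s+t−3]∪[s+t−1+k,s+t−1+i+k]}
 = det Y^{[n−t−i,n]}_{[s−1,s+t−2]∪[s+t+k−1,s+t+i+k−1]} · det Y^{[n−t−i+1,n]}_{[s−1,s+t−3]∪[s+t+k,s+t+i+k]}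
 + det Y^{[n−t−i+1,n]}_{[s−1,s+t−2]∪[s+t+k,s+t+i+k−1]} · det Y^{[n−t−i,n]}_{[s−1,s+t−3]∪[s+t−1+k,s+t+i+k]}`. -/
theorem statement10 {F : Type*} [Field F] {n : ℕ} (Y : Matrix (Fin n) (Fin n) F)
    (s t k i : ℕ) (hs : 2 ≤ s) (ht : 2 ≤ t) (hk : 1 ≤ k) (hi : 1 ≤ i)
    (h : s + t + i + k ≤ n) :
    subdet Y (t + i + 1) (fun u => if u < t then s - 1 + u else s + k + u)
        (fun u => n - t - i + u) *
      subdet Y (t + i) (fun u => if u < t - 1 then s - 1 + u else s + k + u)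
        (fun u => n - t - i + 1 + u)
    = subdet Y (t + i + 1) (fun u => if u < t then s - 1 + u else s + k + u - 1)
          (fun u => n - t - i + u) *
        subdet Y (t + i) (fun u => if u < t - 1 then s - 1 + u else s + k + u + 1)
          (fun u => n - t - i + 1 + u)
      + subdet Y (t + i) (fun u => if u < t then s - 1 + u else s + k + u)
          (fun u => n - t - i + 1 + u) *
        subdet Y (t + i + 1) (fun u => if u < t - 1 then s - 1 + u else s + k + u)
          (fun u => n - t - i + u) :=
  statement10_general Y s t k i ht
end

section
/- Let X and Y be n×n matrices over a field and let k, l be integers with k, l ≥ 1 and k+l ≤ n−1. Define f_{kl}(X,Y) := det [X^{[n−k+1,n]} | Y^{[n−l+1,n]}]_{[n−k−l+1,n]}. Then for every unipotent upper-triangular n×n matrix N₊ and all unipotent lower-triangular n×n matrices N₋ and N₋′, one has f_{kl}(N₊ X N₋, N₊ Y N₋′) = f_{kl}(X, Y). -/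
/-- `f_{kl}(X,Y) = det [X^{[n−k+1,n]} | Y^{[n−l+1,n]}]_{[n−k−l+1,n]}`: the determinant of the
`(k+l) × (k+l)` matrix whose rows are rows `n−k−l+1, …, n` and whose columns are the last
`k` columns of `X` followed by the last `l` columns of `Y`. -/
noncomputable def fkl {F : Type*} [Field F] (n k l : ℕ) (X Y : Matrix (Fin n) (Fin n) F) : F :=
  (Matrix.of fun a b : Fin (k + l) =>
    if b.val < k then ent X (n - k - l + 1 + a.val) (n - k + 1 + b.val)
    else ent Y (n - k - l + 1 + a.val) (n - l + 1 + (b.val - k))).det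


/-!
Since `N₊` is upper triangular, the last `m` rows of `N₊ X` only involve the last `m` rows
of `X`, mixed by the bottom-right `m × m` block of `N₊`; dually, the last `k` columns of `X N₋`
only involve the last `k` columns of `X`, mixed by the bottom-right `k × k` block of `N₋`. So
the matrix whose determinant is `f_{kl}` is multiplied on the left by a unipotent
upper-triangular block and on the right by the block diagonal sum of two unipotent
lower-triangular blocks, all of determinant one.
-/

open Matrix

lemma ent_eq_apply {F : Type*} [Zero F] {r c : ℕ} (A : Matrix (Fin r) (Fin c) F) (i : Fin r)
    (j : Fin c) {a b : ℕ} (ha : a = i + 1) (hb : b = j + 1) : ent A a b = A i j := by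
  subst ha hb
  simp [ent]

def finTail {m n : ℕ} (h : m ≤ n) (i : Fin m) : Fin n := ⟨n - m + i, by omega⟩

lemma finTail_strictMono {m n : ℕ} (h : m ≤ n) : StrictMono (finTail h) :=
  fun i j hij => by simp only [finTail, Fin.mk_lt_mk]; omega

lemma lt_finTail_of_notMem_range {m n : ℕ} (h : m ≤ n) {j : Fin n}
    (hj : j ∉ Set.range (finTail h)) (i : Fin m) : j < finTail h i := by
  by_contra! hle
  exact hj ⟨⟨j - (n - m), by simp only [finTail, Fin.le_def] at hle; omega⟩,
    Fin.ext (by simp only [finTail, Fin.le_def] at hle ⊢; omega)⟩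

namespace Matrix

variable {ι κ α β γ δ R : Type*}

section Semiring

variable [NonUnitalNonAssocSemiring R]

lemma submatrix_mul_of_injective [Fintype β] [Fintype κ] (A : Matrix α β R) (B : Matrix β γ R)
    (r : ι → α) {e : κ → β} (he : Function.Injective e) (c : δ → γ)
    (h : ∀ i j b, b ∉ Set.range e → A (r i) b * B b (c j) = 0) :
    (A * B).submatrix r c = A.submatrix r e * B.submatrix e c := by
  ext i j
  exact (Fintype.sum_of_injective e he _ _ (h i j) fun _ => rfl).symm

variable {m n : ℕ}

lemma IsUpperTriangular.mul_submatrix_finTail {A : Matrix (Fin n) (Fin n) R}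
    (hA : A.IsUpperTriangular) (h : m ≤ n) (B : Matrix (Fin n) γ R) (c : δ → γ) :
    (A * B).submatrix (finTail h) c =
      A.submatrix (finTail h) (finTail h) * B.submatrix (finTail h) c :=
  submatrix_mul_of_injective A B _ (finTail_strictMono h).injective c fun i _ b hb => by
    rw [show A (finTail h i) b = 0 from hA (lt_finTail_of_notMem_range h hb i), zero_mul]

lemma IsLowerTriangular.mul_submatrix_finTail {A : Matrix (Fin n) (Fin n) R}
    (hA : A.IsLowerTriangular) (h : m ≤ n) (B : Matrix γ (Fin n) R) (r : δ → γ) :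
    (B * A).submatrix r (finTail h) =
      B.submatrix r (finTail h) * A.submatrix (finTail h) (finTail h) :=
  submatrix_mul_of_injective B A r (finTail_strictMono h).injective _ fun _ j b hb => by
    rw [show A b (finTail h j) = 0 from hA (lt_finTail_of_notMem_range h hb j), mul_zero]

end Semiring

variable [CommRing R] [LinearOrder ι] [LinearOrder κ] [Fintype κ] [DecidableEq κ]

lemma IsUpperTriangular.det_submatrix_eq_one {A : Matrix ι ι R} (hA : A.IsUpperTriangular)
    (hdiag : ∀ i, A i i = 1) {e : κ → ι} (he : StrictMono e) : (A.submatrix e e).det = 1 := by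
  rw [det_of_isUpperTriangular (M := A.submatrix e e) fun i j hij => hA (he hij)]
  simp [hdiag]

lemma IsLowerTriangular.det_submatrix_eq_one {A : Matrix ι ι R} (hA : A.IsLowerTriangular)
    (hdiag : ∀ i, A i i = 1) {e : κ → ι} (he : StrictMono e) : (A.submatrix e e).det = 1 := by
  rw [det_of_isLowerTriangular (A.submatrix e e) fun i j hij => hA (he hij)]
  simp [hdiag]

end Matrix

section TailMinor

variable {R : Type*} {n k l : ℕ}

/-- The matrix `[X^{[n−k+1,n]} | Y^{[n−l+1,n]}]_{[n−k−l+1,n]}`, with its columns indexed by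
`Fin k ⊕ Fin l`. -/
def tailMinor (h : k + l ≤ n) (X Y : Matrix (Fin n) (Fin n) R) :
    Matrix (Fin (k + l)) (Fin k ⊕ Fin l) R :=
  fromCols (X.submatrix (finTail h) (finTail (by omega : k ≤ n)))
    (Y.submatrix (finTail h) (finTail (by omega : l ≤ n)))

lemma fkl_eq_det_tailMinor {F : Type*} [Field F] (h : k + l ≤ n)
    (X Y : Matrix (Fin n) (Fin n) F) :
    fkl n k l X Y = ((tailMinor h X Y).submatrix id finSumFinEquiv.symm).det := by
  unfold fkl
  congr 1
  ext a b
  induction b using Fin.addCases <;>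
    simpa [tailMinor] using ent_eq_apply _ _ _ (by simp [finTail]; omega) (by simp [finTail]; omega)

lemma tailMinor_mul [Semiring R] (h : k + l ≤ n) {P L L' : Matrix (Fin n) (Fin n) R}
    (hP : P.IsUpperTriangular) (hL : L.IsLowerTriangular) (hL' : L'.IsLowerTriangular)
    (X Y : Matrix (Fin n) (Fin n) R) :
    tailMinor h (P * X * L) (P * Y * L') =
      P.submatrix (finTail h) (finTail h) * tailMinor h X Y *
        fromBlocks (L.submatrix (finTail (by omega : k ≤ n)) (finTail (by omega : k ≤ n))) 0 0
          (L'.submatrix (finTail (by omega : l ≤ n)) (finTail (by omega : l ≤ n))) := by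
  simp only [tailMinor, mul_fromCols, fromCols_mul_fromBlocks, Matrix.mul_zero, add_zero, zero_add,
    hL.mul_submatrix_finTail, hL'.mul_submatrix_finTail, hP.mul_submatrix_finTail]

end TailMinor

theorem statement12_general {F : Type*} [Field F] {n k l : ℕ}
    (hkl : k + l ≤ n - 1) (X Y Np Nm Nm' : Matrix (Fin n) (Fin n) F)
    (hNp_tri : ∀ a b : Fin n, b < a → Np a b = 0) (hNp_diag : ∀ a : Fin n, Np a a = 1)
    (hNm_tri : ∀ a b : Fin n, a < b → Nm a b = 0) (hNm_diag : ∀ a : Fin n, Nm a a = 1)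
    (hNm'_tri : ∀ a b : Fin n, a < b → Nm' a b = 0) (hNm'_diag : ∀ a : Fin n, Nm' a a = 1) :
    fkl n k l (Np * X * Nm) (Np * Y * Nm') = fkl n k l X Y := by
  have h : k + l ≤ n := by omega
  have hNp : Np.IsUpperTriangular := fun a b hab => hNp_tri a b hab
  have hNm : Nm.IsLowerTriangular := fun a b hab => hNm_tri a b hab
  have hNm' : Nm'.IsLowerTriangular := fun a b hab => hNm'_tri a b hab
  rw [fkl_eq_det_tailMinor h, fkl_eq_det_tailMinor h, tailMinor_mul h hNp hNm hNm',
    submatrix_mul _ _ _ _ _ finSumFinEquiv.symm.bijective,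
    submatrix_mul _ _ _ _ _ Function.bijective_id, submatrix_id_id, det_mul, det_mul,
    det_submatrix_equiv_self, det_fromBlocks_zero₂₁,
    hNp.det_submatrix_eq_one hNp_diag (finTail_strictMono h),
    hNm.det_submatrix_eq_one hNm_diag (finTail_strictMono _),
    hNm'.det_submatrix_eq_one hNm'_diag (finTail_strictMono _), one_mul, one_mul, mul_one]

/-- The invariance property `f_{kl}(N₊ X N₋, N₊ Y N₋′) = f_{kl}(X, Y)` for a unipotent
upper-triangular matrix `N₊` and unipotent lower-triangular matrices `N₋`, `N₋′`. -/
theorem statement12 {F : Type*} [Field F] {n k l : ℕ} (hk : 1 ≤ k) (hl : 1 ≤ l)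
    (hkl : k + l ≤ n - 1) (X Y Np Nm Nm' : Matrix (Fin n) (Fin n) F)
    (hNp_tri : ∀ a b : Fin n, b < a → Np a b = 0) (hNp_diag : ∀ a : Fin n, Np a a = 1)
    (hNm_tri : ∀ a b : Fin n, a < b → Nm a b = 0) (hNm_diag : ∀ a : Fin n, Nm a a = 1)
    (hNm'_tri : ∀ a b : Fin n, a < b → Nm' a b = 0) (hNm'_diag : ∀ a : Fin n, Nm' a a = 1) :
    fkl n k l (Np * X * Nm) (Np * Y * Nm') = fkl n k l X Y :=
  statement12_general hkl X Y Np Nm Nm' hNp_tri hNp_diag hNm_tri hNm_diag hNm'_tri hNm'_diag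
end

section
/- Let X be an invertible n×n matrix and Y an n×n matrix over a field, and set U = X⁻¹Y. For integers k, l ≥ 1 with k+l ≤ n, let Φ_{kl}(X,Y) be the n×n matrix whose columns are, in order: columns n−k+1,…,n of the identity matrix, columns n−l+1,…,n of U, and the last (n-th) column of U^m for each m = 2,…,n−k−l+1; set φ̃_{kl}(X,Y) := det Φ_{kl}(X,Y). Then for every invertible n×n matrix A and every unipotent lower-triangular n×n matrix N₋, one has φ̃_{kl}(A X N₋, A Y N₋) = φ̃_{kl}(X, Y). -/
/-- `φ̃_{kl}(X,Y) = det Φ_{kl}(X,Y)`, where `Φ_{kl}(X,Y)` is the `n × n` matrix whose columns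
are, in order: the last `k` columns of the identity matrix (`U⁰`), the last `l` columns of
`U = X⁻¹Y`, and the last column of `U^m` for `m = 2, …, n−k−l+1`. -/
noncomputable def phitilde {F : Type*} [Field F] (n k l : ℕ)
    (X Y : Matrix (Fin n) (Fin n) F) : F :=
  (Matrix.of fun a b : Fin n =>
    if b.val < k then ent (1 : Matrix (Fin n) (Fin n) F) (a.val + 1) (n - k + 1 + b.val)
    else if b.val < k + l then ent (X⁻¹ * Y) (a.val + 1) (n - l + 1 + (b.val - k))
    else ent ((X⁻¹ * Y) ^ (b.val - k - l + 2)) (a.val + 1) n).det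

open Matrix Finset

namespace Matrix

variable {ι R : Type*} [LinearOrder ι] [CommRing R]

theorem det_eq_one_of_isLowerTriangular [Fintype ι] {B : Matrix ι ι R} (hB : B.IsLowerTriangular)
    (hdiag : ∀ i, B i i = 1) : B.det = 1 := by
  rw [det_of_isLowerTriangular B hB]
  exact prod_eq_one fun i _ => hdiag i

def powCols [Fintype ι] (U : Matrix ι ι R) (p : ι → ℕ) (c : ι → ι) : Matrix ι ι R :=
  of fun a b => (U ^ p b) a (c b)

def fiberMat (N : Matrix ι ι R) (p : ι → ℕ) (c : ι → ι) : Matrix ι ι R :=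
  of fun j b => if p j = p b then N (c j) (c b) else 0

section

variable {p : ι → ℕ} {c : ι → ι}

theorem fiberMat_isLowerTriangular {N : Matrix ι ι R} (hN : N.IsLowerTriangular)
    (hc : ∀ j b, j < b → p j = p b → c j < c b) : (fiberMat N p c).IsLowerTriangular := by
  intro j b hjb
  simp only [fiberMat, of_apply]
  split_ifs with hp
  · exact hN (show c j < c b from hc j b hjb hp)
  · rfl

theorem mul_powCols_eq [Fintype ι] {N U U' : Matrix ι ι R} (hNU : SemiconjBy N U' U)
    (hN : N.IsLowerTriangular) (hc : ∀ j b, j < b → p j = p b → c j < c b)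
    (hfiber : ∀ b i, c b ≤ i → ∃ j, p j = p b ∧ c j = i) :
    N * powCols U' p c = powCols U p c * fiberMat N p c := by
  ext a b
  let S := univ.filter fun j => p j = p b
  have hinj : Set.InjOn c S := by
    intro j hj j' hj' hcj
    simp only [S, coe_filter, mem_univ, true_and, Set.mem_ofPred_eq] at hj hj'
    by_contra hne
    rcases lt_or_gt_of_ne hne with h | h
    · exact (hc j j' h (hj.trans hj'.symm)).ne hcj
    · exact (hc j' j h (hj'.trans hj.symm)).ne hcj.symm
  have hvanish : ∀ i ∉ S.image c, N i (c b) = 0 := by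
    intro i hi
    refine hN (show i < c b from not_le.mp fun hle => hi ?_)
    obtain ⟨j, hj, rfl⟩ := hfiber b i hle
    exact mem_image_of_mem c (mem_filter.mpr ⟨mem_univ j, hj⟩)
  calc (N * powCols U' p c) a b = (N * U' ^ p b) a (c b) := by
        simp only [powCols, mul_apply, of_apply]
    _ = (U ^ p b * N) a (c b) := by rw [(hNU.pow_right (p b)).eq]
    _ = ∑ i ∈ S.image c, (U ^ p b) a i * N i (c b) := by
        rw [mul_apply]
        exact (sum_subset (subset_univ _) fun i _ hi => by rw [hvanish i hi, mul_zero]).symm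
    _ = ∑ j ∈ S, (U ^ p j) a (c j) * N (c j) (c b) := by
        rw [sum_image hinj]
        refine sum_congr rfl fun j hj => ?_
        rw [(mem_filter.mp hj).2]
    _ = (powCols U p c * fiberMat N p c) a b := by
        simp only [S, powCols, fiberMat, mul_apply, of_apply, mul_ite, mul_zero, sum_filter]

theorem det_powCols_eq_of_semiconj [Fintype ι] {N U U' : Matrix ι ι R} (hNU : SemiconjBy N U' U)
    (hN : N.IsLowerTriangular) (hNdiag : ∀ i, N i i = 1)
    (hc : ∀ j b, j < b → p j = p b → c j < c b)
    (hfiber : ∀ b i, c b ≤ i → ∃ j, p j = p b ∧ c j = i) :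
    (powCols U' p c).det = (powCols U p c).det := by
  have h := congrArg det (mul_powCols_eq hNU hN hc hfiber)
  rwa [det_mul, det_mul, det_eq_one_of_isLowerTriangular hN hNdiag,
    det_eq_one_of_isLowerTriangular (fiberMat_isLowerTriangular hN hc)
      fun i => by simp [fiberMat, hNdiag], one_mul, mul_one] at h

end

end Matrix

section

variable {n : ℕ}

/-- Column `b` of `Φ_{kl}` is `U ^ phiPow k l b` applied to `e (phiCol k l b)`; `phiCol` is written
as `n - d`, the `d`-th index from the end. -/
def phiPow (k l : ℕ) (b : Fin n) : ℕ :=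
  if b < k then 0 else if b < k + l then 1 else b - k - l + 2

def phiCol (k l : ℕ) (b : Fin n) : Fin n :=
  ⟨n - if b < k then k - b else if b < k + l then l - (b - k) else 1, by split_ifs <;> omega⟩

theorem phiCol_lt_of_phiPow_eq {k l : ℕ} (hkl : k + l ≤ n) {j b : Fin n} (hjb : j < b)
    (hp : phiPow k l j = phiPow k l b) : phiCol k l j < phiCol k l b := by
  rw [Fin.lt_def] at hjb ⊢
  simp only [phiPow, phiCol] at hp ⊢
  split_ifs at hp ⊢ <;> omega

theorem exists_phiCol_eq {k l : ℕ} (hkl : k + l ≤ n) (b i : Fin n) (hi : phiCol k l b ≤ i) :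
    ∃ j, phiPow k l j = phiPow k l b ∧ phiCol k l j = i := by
  rw [Fin.le_def] at hi
  simp only [phiCol] at hi
  split_ifs at hi with hb hb'
  · refine ⟨⟨i - (n - k), by omega⟩, ?_, Fin.ext ?_⟩ <;>
      simp only [phiPow, phiCol] <;> split_ifs <;> omega
  · refine ⟨⟨k + (i - (n - l)), by omega⟩, ?_, Fin.ext ?_⟩ <;>
      simp only [phiPow, phiCol] <;> split_ifs <;> omega
  · exact ⟨b, rfl, Fin.ext (by simp only [phiCol]; split_ifs; omega)⟩

theorem ent_add_one_eq {α : Type*} [Zero α] {r c : ℕ} (M : Matrix (Fin r) (Fin c) α) (a : Fin r)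
    (j : Fin c) {m : ℕ} (hm : m = j + 1) : ent M (a + 1) m = M a j := by
  subst hm
  simp [ent]

theorem phitilde_eq_det_powCols {F : Type*} [Field F] {k l : ℕ} (hkl : k + l ≤ n)
    (X Y : Matrix (Fin n) (Fin n) F) :
    phitilde n k l X Y = (powCols (X⁻¹ * Y) (phiPow k l) (phiCol k l)).det := by
  unfold phitilde
  congr 1
  ext a b
  have hb := b.isLt
  simp only [powCols, phiPow, of_apply]
  split_ifs <;>
    rw [ent_add_one_eq _ _ (phiCol k l b)] <;>
    first | simp only [pow_zero, pow_one] | (simp only [phiCol]; split_ifs; omega)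

end

theorem statement13_general {F : Type*} [Field F] {n k l : ℕ}
    (hkl : k + l ≤ n) (X Y : Matrix (Fin n) (Fin n) F)
    (A Nm : Matrix (Fin n) (Fin n) F) (hA : IsUnit A.det)
    (hNm_tri : ∀ a b : Fin n, a < b → Nm a b = 0) (hNm_diag : ∀ a : Fin n, Nm a a = 1) :
    phitilde n k l (A * X * Nm) (A * Y * Nm) = phitilde n k l X Y := by
  have hN : Nm.IsLowerTriangular := fun i j h => hNm_tri i j h
  have hNinv : Nm * Nm⁻¹ = 1 :=
    mul_nonsing_inv Nm (by rw [det_eq_one_of_isLowerTriangular hN hNm_diag]; exact isUnit_one)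
  have hconj : SemiconjBy Nm ((A * X * Nm)⁻¹ * (A * Y * Nm)) (X⁻¹ * Y) := by
    simp only [SemiconjBy, Matrix.mul_inv_rev]
    calc Nm * (Nm⁻¹ * (X⁻¹ * A⁻¹) * (A * Y * Nm))
        = (Nm * Nm⁻¹) * X⁻¹ * (A⁻¹ * A) * Y * Nm := by noncomm_ring
      _ = X⁻¹ * Y * Nm := by rw [hNinv, nonsing_inv_mul A hA]; noncomm_ring
  rw [phitilde_eq_det_powCols hkl, phitilde_eq_det_powCols hkl]
  exact det_powCols_eq_of_semiconj hconj hN hNm_diag (fun j b => phiCol_lt_of_phiPow_eq hkl)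
    (exists_phiCol_eq hkl)

/-- The invariance property `φ̃_{kl}(A X N₋, A Y N₋) = φ̃_{kl}(X, Y)` for an invertible
matrix `A` and a unipotent lower-triangular matrix `N₋`, where `X` is invertible. -/
theorem statement13 {F : Type*} [Field F] {n k l : ℕ} (hk : 1 ≤ k) (hl : 1 ≤ l)
    (hkl : k + l ≤ n) (X Y : Matrix (Fin n) (Fin n) F) (hX : IsUnit X.det)
    (A Nm : Matrix (Fin n) (Fin n) F) (hA : IsUnit A.det)
    (hNm_tri : ∀ a b : Fin n, a < b → Nm a b = 0) (hNm_diag : ∀ a : Fin n, Nm a a = 1) :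
    phitilde n k l (A * X * Nm) (A * Y * Nm) = phitilde n k l X Y :=
  statement13_general hkl X Y A Nm hA hNm_tri hNm_diag
end
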